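/- arXiv:0708.0431 — 6 statements merged into one kernel-verified Lean document; each statement's English description precedes it below -/
import Mathlib

section
/- Let k be a field and let f_1, ..., f_r ∈ k[x] be polynomials generating the unit ideal of k[x] (i.e., the ideal (f_1, ..., f_r) equals all of k[x]). Let m ≥ 0 be an integer and set d := max_{1 ≤ i ≤ r} deg(f_i). Define the k-vector subspace V of k[x] by V := { f_1 g_1 + ... + f_r g_r : g_1, ..., g_r ∈ k[x], deg(g_j) < m for all 1 ≤ j ≤ r }. Then dim_k(V) ≥ min(2m, m + d). -/
/-!
Let `F = f i` be a nonzero generator of maximal degree `d`, and let `π : k[X] → k[X]/(F)`, a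
`d`-dimensional algebra. On `V` the kernel of `π` contains `F * k[X]_m`, of dimension `m`.
Write `V_j` for the space built with the degree bound `j`. The images `W_j = π(V_j)` increase
with `j` and `π(X) * W_j ⊆ W_{j+1}`, so if `W_{j+1} ≤ W_j` then `W_j` is an ideal; it contains
every `π(f_i)`, hence `1`, since the `f_i` generate the unit ideal. Thus `W_j` grows strictly
until it is everything, `dim W_m ≥ min m d`, and rank–nullity gives `dim V ≥ m + min m d`.
-/

open Polynomial Module

section Growth

variable {K M : Type*} [DivisionRing K] [AddCommGroup M] [Module K M]

theorem Submodule.min_le_finrank_of_succ_le_imp_eq_top [FiniteDimensional K M]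
    {W : ℕ → Submodule K M} (hW : Monotone W) (h_top : ∀ j, W (j + 1) ≤ W j → W j = ⊤)
    (j : ℕ) : min j (finrank K M) ≤ finrank K (W j) := by
  induction j with
  | zero => simp
  | succ j ih =>
    by_cases htop : W j = ⊤
    · have : W (j + 1) = ⊤ := top_unique (htop ▸ hW (Nat.le_add_right j 1))
      rw [this, finrank_top]
      omega
    · have := Submodule.finrank_lt_finrank_of_lt <|
        lt_of_le_not_ge (hW (Nat.le_add_right j 1)) (mt (h_top j) htop)
      omega

variable {N : Type*} [AddCommGroup N] [Module K N]

theorem Submodule.finrank_map_add_finrank_le (π : M →ₗ[K] N) {U P : Submodule K M}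
    [FiniteDimensional K P] (hUP : U ≤ P) (hU : U ≤ LinearMap.ker π) :
    finrank K (P.map π) + finrank K U ≤ finrank K P := by
  rw [← LinearMap.range_domRestrict, ← (π.domRestrict P).finrank_range_add_finrank_ker,
    LinearMap.ker_domRestrict]
  gcongr
  calc finrank K U = finrank K (U.comap P.subtype) :=
        (Submodule.comapSubtypeEquivOfLe hUP).finrank_eq.symm
    _ ≤ _ := Submodule.finrank_mono (Submodule.comap_mono hU)

end Growth

namespace Polynomial

variable {R : Type*} [CommRing R] {ι : Type*} [Fintype ι]

theorem exists_ne_zero_natDegree_eq_sup {f : ι → R[X]} (hf : ∃ i, f i ≠ 0) :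
    ∃ i, f i ≠ 0 ∧ (f i).natDegree = Finset.univ.sup fun i => (f i).natDegree := by
  classical
  obtain ⟨i, hi, hmax⟩ := ({i | f i ≠ 0} : Finset ι).exists_max_image
    (fun i => (f i).natDegree) (by simpa [Finset.Nonempty] using hf)
  refine ⟨i, (Finset.mem_filter.1 hi).2,
    le_antisymm (Finset.le_sup (f := fun i => (f i).natDegree) (Finset.mem_univ i))
      (Finset.sup_le fun i' _ => ?_)⟩
  by_cases h : f i' = 0
  · simp [h]
  · exact hmax i' (by simpa using h)

noncomputable def combinationsDegreeLT (f : ι → R[X]) (j : ℕ) : Submodule R R[X] :=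
  Submodule.span R {h | ∃ g : ι → R[X], (∀ i, (g i).degree < j) ∧ h = ∑ i, f i * g i}

variable (f : ι → R[X])

theorem mul_mem_combinationsDegreeLT (i : ι) {j : ℕ} {g : R[X]} (hg : g.degree < j) :
    f i * g ∈ combinationsDegreeLT f j := by
  classical
  refine Submodule.subset_span ⟨Pi.single i g, fun i' => ?_, ?_⟩
  · rcases eq_or_ne i' i with rfl | hne
    · simpa using hg
    · simp [Pi.single_eq_of_ne hne]
  · rw [Fintype.sum_eq_single i fun i' hne => by simp [Pi.single_eq_of_ne hne]]
    simp

theorem combinationsDegreeLT_mono : Monotone (combinationsDegreeLT f) := by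
  intro j j' h
  refine Submodule.span_mono ?_
  rintro _ ⟨g, hg, rfl⟩
  exact ⟨g, fun i => (hg i).trans_le (by exact_mod_cast h), rfl⟩

theorem X_mul_mem_combinationsDegreeLT {j : ℕ} {p : R[X]} (hp : p ∈ combinationsDegreeLT f j) :
    X * p ∈ combinationsDegreeLT f (j + 1) := by
  induction hp using Submodule.span_induction with
  | mem _ h =>
    obtain ⟨g, hg, rfl⟩ := h
    refine Submodule.subset_span ⟨fun i => X * g i, fun i => ?_, ?_⟩
    · calc (X * g i).degree ≤ 1 + (g i).degree := by grw [degree_mul_le, degree_X_le]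
        _ < 1 + j := WithBot.add_lt_add_left WithBot.coe_ne_bot (hg i)
        _ = ↑(j + 1) := by norm_cast; rw [add_comm]
    · simp only [Finset.mul_sum, mul_left_comm]
  | zero => simp
  | add _ _ _ _ hp hq => simpa [mul_add] using add_mem hp hq
  | smul a _ _ hp => simpa [mul_smul_comm] using Submodule.smul_mem _ a hp

theorem combinationsDegreeLT_le_degreeLT {d : ℕ} (hf : ∀ i, (f i).natDegree ≤ d) (j : ℕ) :
    combinationsDegreeLT f j ≤ degreeLT R (d + j) := by
  refine Submodule.span_le.2 ?_
  rintro _ ⟨g, hg, rfl⟩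
  refine Submodule.sum_mem _ fun i _ => mem_degreeLT.2 ?_
  calc (f i * g i).degree ≤ d + (g i).degree := by
        grw [degree_mul_le, degree_le_of_natDegree_le (hf i)]
    _ < d + j := WithBot.add_lt_add_left WithBot.coe_ne_bot (hg i)
    _ = ↑(d + j) := by norm_cast

theorem map_combinationsDegreeLT_eq_top {A : Type*} [Ring A] [Algebra R A] {π : R[X] →ₐ[R] A}
    (hπ : Function.Surjective π) (hf : Ideal.span (Set.range f) = ⊤) {j : ℕ}
    (h : (combinationsDegreeLT f (j + 1)).map π.toLinearMap ≤
      (combinationsDegreeLT f j).map π.toLinearMap) :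
    (combinationsDegreeLT f j).map π.toLinearMap = ⊤ := by
  set W := (combinationsDegreeLT f j).map π.toLinearMap
  have hX : ∀ w ∈ W, π X * w ∈ W := by
    rintro _ ⟨p, hp, rfl⟩
    exact h ⟨X * p, X_mul_mem_combinationsDegreeLT f hp, map_mul π X p⟩
  have hmul (p : R[X]) : ∀ w ∈ W, π p * w ∈ W := by
    induction p using Polynomial.induction_on with
    | C a =>
      intro w hw
      rw [← Polynomial.algebraMap_eq, π.commutes, ← Algebra.smul_def]
      exact W.smul_mem a hw
    | add p q hp hq => intro w hw; simpa [add_mul] using add_mem (hp w hw) (hq w hw)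
    | monomial n a hn =>
      intro w hw
      rw [pow_succ, ← mul_assoc, map_mul, mul_assoc]
      exact hn _ (hX w hw)
  have hf_mem (i : ι) : π (f i) ∈ W := by
    have h_one : (1 : R[X]).degree < ↑(j + 1) :=
      degree_one_le.trans_lt (by exact_mod_cast j.succ_pos)
    exact h ⟨f i * 1, mul_mem_combinationsDegreeLT f i h_one, by simp⟩
  have hone : (1 : A) ∈ W := by
    obtain ⟨c, hc⟩ := Ideal.mem_span_range_iff_exists_fun.1 (hf ▸ Submodule.mem_top (x := 1))
    rw [← map_one π, ← hc, map_sum]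
    exact Submodule.sum_mem _ fun i _ => by rw [map_mul]; exact hmul _ _ (hf_mem i)
  refine eq_top_iff.2 fun a _ => ?_
  obtain ⟨p, rfl⟩ := hπ a
  simpa using hmul p 1 hone

section Field

variable {k : Type*} [Field k] (f : ι → k[X])

instance (j : ℕ) : FiniteDimensional k (combinationsDegreeLT f j) :=
  Submodule.finiteDimensional_of_le <| combinationsDegreeLT_le_degreeLT f
    (fun i => Finset.le_sup (f := fun i => (f i).natDegree) (Finset.mem_univ i)) j

theorem min_le_finrank_combinationsDegreeLT (hf : Ideal.span (Set.range f) = ⊤) {i : ι}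
    (hi : f i ≠ 0) (m : ℕ) :
    min (2 * m) (m + (f i).natDegree) ≤ finrank k (combinationsDegreeLT f m) := by
  have : FiniteDimensional k (AdjoinRoot (f i)) := (AdjoinRoot.powerBasis hi).finite
  have h_image : min m (f i).natDegree ≤
      finrank k ((combinationsDegreeLT f m).map (AdjoinRoot.mkₐ (f i)).toLinearMap) := by
    rw [← AdjoinRoot.powerBasis_dim hi, ← (AdjoinRoot.powerBasis hi).finrank]
    exact Submodule.min_le_finrank_of_succ_le_imp_eq_top
      (fun _ _ h => Submodule.map_mono (combinationsDegreeLT_mono f h))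
      (fun _ => map_combinationsDegreeLT_eq_top f AdjoinRoot.mk_surjective hf) m
  let U := (degreeLT k m).map (LinearMap.mulLeft k (f i))
  have hU : finrank k U = m := by
    rw [← (Submodule.equivMapOfInjective _ (mul_right_injective₀ hi) _).finrank_eq,
      finrank_eq_card_basis (degreeLT.basis k m), Fintype.card_fin]
  have hUV : U ≤ combinationsDegreeLT f m := Submodule.map_le_iff_le_comap.2 fun g hg =>
    mul_mem_combinationsDegreeLT f i (mem_degreeLT.1 hg)
  have hU_ker : U ≤ LinearMap.ker (AdjoinRoot.mkₐ (f i)).toLinearMap := by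
    rintro _ ⟨g, -, rfl⟩
    simp [AdjoinRoot.mk_self]
  calc min (2 * m) (m + (f i).natDegree) = min m (f i).natDegree + finrank k U := by omega
    _ ≤ _ := by gcongr
    _ ≤ _ := Submodule.finrank_map_add_finrank_le _ hUV hU_ker

end Field

end Polynomial

theorem stmt_0_general {k : Type*} [Field k] (r : ℕ)
    (f : Fin r → Polynomial k)
    (hunit : Ideal.span (Set.range f) = (⊤ : Ideal (Polynomial k)))
    (m : ℕ) (d : ℕ) (hd : d = Finset.univ.sup fun i => (f i).natDegree)
    (V : Submodule k (Polynomial k))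
    (hV : V = Submodule.span k
      {h : Polynomial k | ∃ g : Fin r → Polynomial k,
        (∀ i, (g i).degree < (m : WithBot ℕ)) ∧ h = ∑ i, f i * g i}) :
    min (2 * m) (m + d) ≤ Module.finrank k V := by
  change V = combinationsDegreeLT f m at hV
  subst hV
  have hf : ∃ i, f i ≠ 0 := by
    by_contra! h
    exact top_ne_bot (hunit ▸ Ideal.span_eq_bot.2 (by rintro _ ⟨i, rfl⟩; exact h i))
  obtain ⟨i, hi, hid⟩ := exists_ne_zero_natDegree_eq_sup hf
  simpa [hd, hid] using min_le_finrank_combinationsDegreeLT f hunit hi m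

/-- Let `k` be a field and `f 1, …, f r ∈ k[x]` polynomials generating the
unit ideal of `k[x]`. Let `m ≥ 0` and `d := max_{1 ≤ i ≤ r} deg (f i)`.  If
`V = { f 1 * g 1 + ⋯ + f r * g r : deg (g j) < m for all j }`, then
`dim_k V ≥ min (2 m) (m + d)`. -/
theorem stmt_0 {k : Type*} [Field k] (r : ℕ) (hr : 1 ≤ r)
    (f : Fin r → Polynomial k)
    (hunit : Ideal.span (Set.range f) = (⊤ : Ideal (Polynomial k)))
    (m : ℕ) (d : ℕ) (hd : d = Finset.univ.sup fun i => (f i).natDegree)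
    (V : Submodule k (Polynomial k))
    (hV : V = Submodule.span k
      {h : Polynomial k | ∃ g : Fin r → Polynomial k,
        (∀ i, (g i).degree < (m : WithBot ℕ)) ∧ h = ∑ i, f i * g i}) :
    min (2 * m) (m + d) ≤ Module.finrank k V :=
  stmt_0_general r f hunit m d hd V hV
end

section
/- Let k be a field and let f_1, f_2 ∈ k[x] be two polynomials generating the unit ideal of k[x]. Let m ≥ 0 be an integer and set d := max(deg(f_1), deg(f_2)). Define the k-vector subspace V of k[x] by V := { f_1 g_1 + f_2 g_2 : g_1, g_2 ∈ k[x], deg(g_j) < m for j = 1, 2 }. Then dim_k(V) = min(2m, m + d) exactly. -/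
/-!
The space `V` is the image of the linear map `(g₁, g₂) ↦ f₁ g₁ + f₂ g₂` on pairs of polynomials of
degree `< m`, a space of dimension `2m`. Since `f₁` and `f₂` are coprime, every relation
`f₁ g₁ + f₂ g₂ = 0` is of the form `(g₁, g₂) = (f₂ h, -f₁ h)`, and the degree bounds on `g₁, g₂`
translate exactly into `deg h < m - d`. Hence the kernel has dimension `m - d` (truncated
subtraction), and rank–nullity gives `dim V = 2m - (m - d) = min (2m) (m + d)`.
-/

open Polynomial Module LinearMap

theorem IsCoprime.exists_eq_of_mul_add_mul_eq_zero {R : Type*} [CommRing R] {a b x y : R}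
    (h : IsCoprime a b) (hxy : a * x + b * y = 0) : ∃ z, x = b * z ∧ y = -a * z := by
  obtain ⟨u, v, huv⟩ := h
  exact ⟨v * x - u * y, by linear_combination -x * huv + u * hxy,
    by linear_combination -y * huv + v * hxy⟩

namespace Polynomial

theorem finrank_degreeLT (R : Type*) [Semiring R] [StrongRankCondition R] (n : ℕ) :
    finrank R R[X]_n = n := by
  rw [finrank_eq_card_basis (degreeLT.basis R n), Fintype.card_fin]

section Semiring

variable {R : Type*} [Semiring R] {f p : R[X]} {m n : ℕ}

theorem mul_mem_degreeLT (hf : f.natDegree ≤ n) (hp : p ∈ R[X]_(m - n)) : f * p ∈ R[X]_m := by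
  rw [mem_degreeLT] at hp ⊢
  by_cases hp0 : p = 0
  · simp [hp0]
  rw [degree_eq_natDegree hp0, Nat.cast_lt] at hp
  calc (f * p).degree ≤ (f.natDegree + p.natDegree : ℕ) :=
        (degree_le_natDegree).trans (Nat.cast_le.mpr natDegree_mul_le)
    _ < m := Nat.cast_lt.mpr (by omega)

theorem mem_degreeLT_of_mul_mem [NoZeroDivisors R] (hf : f ≠ 0) (h : f * p ∈ R[X]_m) :
    p ∈ R[X]_(m - f.natDegree) := by
  rw [mem_degreeLT] at h ⊢
  by_cases hp0 : p = 0
  · simp [hp0]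
  rw [degree_eq_natDegree (mul_ne_zero hf hp0), natDegree_mul hf hp0, Nat.cast_lt] at h
  rw [degree_eq_natDegree hp0, Nat.cast_lt]
  omega

theorem mem_degreeLT_sub_max_of_mul_mem [NoZeroDivisors R] {f₁ f₂ : R[X]} (hf : f₁ ≠ 0 ∨ f₂ ≠ 0)
    (h₁ : f₁ * p ∈ R[X]_m) (h₂ : f₂ * p ∈ R[X]_m) :
    p ∈ R[X]_(m - max f₁.natDegree f₂.natDegree) := by
  wlog hle : f₂.natDegree ≤ f₁.natDegree generalizing f₁ f₂
  · rw [max_comm]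
    exact this hf.symm h₂ h₁ (by omega)
  rw [max_eq_left hle]
  by_cases hf₁ : f₁ = 0
  · have hf₂ := hf.resolve_left (not_not.mpr hf₁)
    simp only [hf₁, natDegree_zero, Nat.le_zero] at hle
    simpa [hf₁, hle] using mem_degreeLT_of_mul_mem hf₂ h₂
  · exact mem_degreeLT_of_mul_mem hf₁ h₁

end Semiring

section CommRing

variable {R : Type*} [CommRing R] (f₁ f₂ : R[X]) (m : ℕ)

noncomputable def bezoutMap : R[X]_m × R[X]_m →ₗ[R] R[X] :=
  (mulLeft R f₁ ∘ₗ (R[X]_m).subtype).coprod (mulLeft R f₂ ∘ₗ (R[X]_m).subtype)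

@[simp]
theorem bezoutMap_apply (g : R[X]_m × R[X]_m) :
    bezoutMap f₁ f₂ m g = f₁ * g.1 + f₂ * g.2 :=
  rfl

noncomputable def syzygyMap :
    R[X]_(m - max f₁.natDegree f₂.natDegree) →ₗ[R] R[X]_m × R[X]_m :=
  ((mulLeft R f₂ ∘ₗ Submodule.subtype _).codRestrict _ fun h ↦
      mul_mem_degreeLT (le_max_right _ _) h.2).prod
    ((mulLeft R (-f₁) ∘ₗ Submodule.subtype _).codRestrict _ fun h ↦
      mul_mem_degreeLT ((natDegree_neg f₁).trans_le (le_max_left _ _)) h.2)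

@[simp]
theorem syzygyMap_apply_fst (h : R[X]_(m - max f₁.natDegree f₂.natDegree)) :
    ((syzygyMap f₁ f₂ m h).1 : R[X]) = f₂ * h :=
  rfl

@[simp]
theorem syzygyMap_apply_snd (h : R[X]_(m - max f₁.natDegree f₂.natDegree)) :
    ((syzygyMap f₁ f₂ m h).2 : R[X]) = -f₁ * h :=
  rfl

theorem range_bezoutMap :
    range (bezoutMap f₁ f₂ m) = Submodule.span R
      {h | ∃ g₁ g₂ : R[X], g₁.degree < m ∧ g₂.degree < m ∧ h = f₁ * g₁ + f₂ * g₂} := by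
  rw [← Submodule.span_eq (range _)]
  congr 1
  ext h
  constructor
  · rintro ⟨⟨g₁, g₂⟩, rfl⟩
    exact ⟨g₁, g₂, mem_degreeLT.1 g₁.2, mem_degreeLT.1 g₂.2, rfl⟩
  · rintro ⟨g₁, g₂, hg₁, hg₂, rfl⟩
    exact ⟨(⟨g₁, mem_degreeLT.2 hg₁⟩, ⟨g₂, mem_degreeLT.2 hg₂⟩), rfl⟩

variable {f₁ f₂ m} [IsDomain R]

theorem syzygyMap_injective (hf : f₁ ≠ 0 ∨ f₂ ≠ 0) : Function.Injective (syzygyMap f₁ f₂ m) := by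
  rw [← ker_eq_bot, ker_eq_bot']
  intro h hh
  ext1
  rcases hf with hf₁ | hf₂
  · simpa [hf₁] using congrArg (fun g ↦ (g.2 : R[X])) hh
  · simpa [hf₂] using congrArg (fun g ↦ (g.1 : R[X])) hh

theorem ker_bezoutMap (hc : IsCoprime f₁ f₂) :
    ker (bezoutMap f₁ f₂ m) = range (syzygyMap f₁ f₂ m) := by
  apply le_antisymm
  · rintro ⟨g₁, g₂⟩ hg
    obtain ⟨h, hh₁, hh₂⟩ := hc.exists_eq_of_mul_add_mul_eq_zero hg
    have hmem : h ∈ R[X]_(m - max f₁.natDegree f₂.natDegree) :=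
      mem_degreeLT_sub_max_of_mul_mem hc.ne_zero_or_ne_zero (by
        rw [← neg_neg (f₁ * h), ← neg_mul, ← hh₂]; exact (R[X]_m).neg_mem g₂.2) (hh₁ ▸ g₁.2)
    exact ⟨⟨h, hmem⟩, Prod.ext (Subtype.ext hh₁.symm) (Subtype.ext hh₂.symm)⟩
  · rintro _ ⟨h, rfl⟩
    simp only [mem_ker, bezoutMap_apply, syzygyMap_apply_fst, syzygyMap_apply_snd]
    ring

end CommRing

theorem finrank_range_bezoutMap {K : Type*} [Field K] {f₁ f₂ : K[X]} (hc : IsCoprime f₁ f₂)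
    (m : ℕ) :
    finrank K (range (bezoutMap f₁ f₂ m)) = min (2 * m) (m + max f₁.natDegree f₂.natDegree) := by
  have hker : finrank K (ker (bezoutMap f₁ f₂ m)) = m - max f₁.natDegree f₂.natDegree := by
    rw [ker_bezoutMap hc, finrank_range_of_inj (syzygyMap_injective hc.ne_zero_or_ne_zero),
      finrank_degreeLT]
  have := finrank_range_add_finrank_ker (bezoutMap f₁ f₂ m)
  rw [finrank_prod, finrank_degreeLT, hker] at this
  omega

end Polynomial

/-- Let `k` be a field and `f₁, f₂ ∈ k[x]` generate the unit ideal of `k[x]`.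
Let `m ≥ 0` and `d := max (deg f₁) (deg f₂)`.  If
`V = { f₁ * g₁ + f₂ * g₂ : deg gⱼ < m for j = 1, 2 }`, then `dim_k V = min (2 m) (m + d)`. -/
theorem stmt_1 {k : Type*} [Field k] (f₁ f₂ : Polynomial k)
    (hunit : Ideal.span {f₁, f₂} = (⊤ : Ideal (Polynomial k)))
    (m : ℕ) (d : ℕ) (hd : d = max f₁.natDegree f₂.natDegree)
    (V : Submodule k (Polynomial k))
    (hV : V = Submodule.span k
      {h : Polynomial k | ∃ g₁ g₂ : Polynomial k,
        g₁.degree < (m : WithBot ℕ) ∧ g₂.degree < (m : WithBot ℕ) ∧ h = f₁ * g₁ + f₂ * g₂}) :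
    Module.finrank k V = min (2 * m) (m + d) := by
  have hc : IsCoprime f₁ f₂ := Ideal.mem_span_pair.mp (hunit ▸ Submodule.mem_top)
  rw [hV, ← range_bezoutMap, hd, finrank_range_bezoutMap hc]
end

section
/- Let k be an algebraically closed field of characteristic p > 0 and let h ∈ k[x] be a nonzero polynomial, written (uniquely) as h(x) = Σ_{t=0}^{p−1} f_t(x)^p x^t with f_0, ..., f_{p−1} ∈ k[x]. If every root of h in k has multiplicity strictly less than p, then the ideal (f_0, ..., f_{p−1}) is the unit ideal of k[x]. -/
open Polynomial

/-- Let `k` be an algebraically closed field of characteristic `p > 0` and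
`h ∈ k[x]` a nonzero polynomial, written as `h = ∑_{t=0}^{p-1} (f t)^p * x^t`.  If every
root of `h` has multiplicity `< p`, then `(f 0, …, f (p-1))` is the unit ideal of `k[x]`. -/
theorem stmt_3 {k : Type*} [Field k] [IsAlgClosed k]
    (p : ℕ) (hp : p.Prime) [CharP k p]
    (h : Polynomial k) (hh : h ≠ 0)
    (f : Fin p → Polynomial k)
    (hdecomp : h = ∑ t : Fin p, f t ^ p * X ^ (t : ℕ))
    (hmult : ∀ a : k, rootMultiplicity a h < p) :
    Ideal.span (Set.range f) = (⊤ : Ideal (Polynomial k)) := by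
  by_contra hne
  obtain ⟨M, hM, hIM⟩ := Ideal.exists_le_maximal _ hne
  have hf : ∀ t : Fin p, f t ∈ M := fun t =>
    hIM (Ideal.subset_span ⟨t, rfl⟩)
  rcases eq_or_ne M ⊥ with hb | hb
  · apply hh
    rw [hdecomp]
    refine Finset.sum_eq_zero fun t _ => ?_
    have : f t = 0 := by simpa [hb] using hf t
    simp [this, hp.pos.ne']
  · set q := Submodule.IsPrincipal.generator M with hq
    have hqprime : Prime q :=
      Submodule.IsPrincipal.prime_generator_of_isPrime M hb
    have hqdvd : ∀ t : Fin p, q ∣ f t := fun t => by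
      have := hf t
      rwa [← Ideal.span_singleton_generator M, Ideal.mem_span_singleton] at this
    have hdeg : q.degree ≠ 0 := by
      intro h0
      exact hqprime.not_unit (isUnit_iff_degree_eq_zero.mpr h0)
    obtain ⟨a, ha⟩ := IsAlgClosed.exists_root q hdeg
    have hXa : (X - C a) ∣ q := dvd_iff_isRoot.mpr ha
    have hdvdh : (X - C a) ^ p ∣ h := by
      rw [hdecomp]
      refine Finset.dvd_sum fun t _ => dvd_mul_of_dvd_left ?_ _
      exact pow_dvd_pow_of_dvd (hXa.trans (hqdvd t)) p
    have := (Polynomial.le_rootMultiplicity_iff hh).mpr hdvdh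
    exact absurd (hmult a) (not_lt.mpr this)
end

section
/- With the setup below, for every integer 1 ≤ i ≤ n − 1 the polynomial h_{min,σ(i)}^p divides f^{ε(i)} · h_{min,i} in k[x], so that h_{rnk,i} := f^{ε(i)} h_{min,i} / h_{min,σ(i)}^p is a polynomial; for each α ∈ B, the multiplicity of α as a root of h_{rnk,i} equals ⌊p·σ(i)·n_α / n⌋ − p·⌊σ(i)·n_α / n⌋, which lies between 0 and p − 1; and every β ∈ k with β ∉ B is not a root of h_{rnk,i}. In particular, every root of h_{rnk,i} has multiplicity strictly less than p. -/
open Polynomial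

lemma rootMult_prod {k : Type*} [Field k] [DecidableEq k] (S : Finset k) (m : k → ℕ) (β : k) :
    rootMultiplicity β (∏ α ∈ S, (X - C α) ^ m α) = if β ∈ S then m β else 0 := by
  induction S using Finset.induction with
  | empty => simp
  | @insert α S hα ih =>
    have hne : ((X - C α) ^ m α) * ∏ γ ∈ S, (X - C γ) ^ m γ ≠ 0 := by
      apply mul_ne_zero (pow_ne_zero _ (X_sub_C_ne_zero α))
      exact Finset.prod_ne_zero_iff.2 fun γ _ => pow_ne_zero _ (X_sub_C_ne_zero γ)
    rw [Finset.prod_insert hα, rootMultiplicity_mul hne, ih]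
    have hpow : rootMultiplicity β ((X - C α) ^ m α) = if β = α then m α else 0 := by
      split_ifs with h
      · rw [h, rootMultiplicity_X_sub_C_pow]
      · apply rootMultiplicity_eq_zero
        simp [IsRoot, sub_eq_zero, h]
    rw [hpow]
    by_cases h : β = α
    · subst h; simp [hα]
    · simp [h, Finset.mem_insert]

/-- With `f = ∏_{α ∈ B} (x - α)^{n_α}` and
`hmin j = ∏_{α ∈ B} (x - α)^{⌊j n_α / n⌋}`, for every `1 ≤ i ≤ n - 1` the polynomial
`hmin (σ i) ^ p` divides `f ^ ε i * hmin i`, so `h_rnk = f ^ ε i * hmin i / hmin (σ i) ^ p`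
is a polynomial; for each `α ∈ B` the multiplicity of `α` as a root of `h_rnk` equals
`⌊p σ(i) n_α / n⌋ - p ⌊σ(i) n_α / n⌋`, which is at most `p - 1`; every `β ∉ B` is not a
root of `h_rnk`; and every root of `h_rnk` has multiplicity `< p`. -/
theorem stmt_5 {k : Type*} [Field k] [IsAlgClosed k]
    (p : ℕ) (hp : p.Prime) [CharP k p]
    (n : ℕ) (hn : 2 ≤ n) (hnp : Nat.Coprime n p)
    (B : Finset k) (hB : B.Nonempty)
    (e : k → ℕ) (he : ∀ α ∈ B, 0 < e α ∧ e α < n)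
    (hsum : n ∣ ∑ α ∈ B, e α)
    (f : Polynomial k) (hf : f = ∏ α ∈ B, (X - C α) ^ e α)
    (hmin : ℕ → Polynomial k)
    (hhmin : ∀ j, hmin j = ∏ α ∈ B, (X - C α) ^ (j * e α / n))
    (i : ℕ) (hi1 : 1 ≤ i) (hi2 : i ≤ n - 1)
    (σi : ℕ) (hσ1 : 1 ≤ σi) (hσ2 : σi ≤ n - 1) (hσ3 : p * σi ≡ i [MOD n])
    (εi : ℕ) (hε1 : εi ≤ p - 1) (hε2 : p ∣ n * εi + i) :
    hmin σi ^ p ∣ f ^ εi * hmin i ∧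
    (∀ α ∈ B,
      rootMultiplicity α ((f ^ εi * hmin i) /ₘ hmin σi ^ p)
        = p * σi * e α / n - p * (σi * e α / n) ∧
      p * σi * e α / n - p * (σi * e α / n) ≤ p - 1) ∧
    (∀ β : k, β ∉ B → ¬ ((f ^ εi * hmin i) /ₘ hmin σi ^ p).IsRoot β) ∧
    (∀ β : k, rootMultiplicity β ((f ^ εi * hmin i) /ₘ hmin σi ^ p) < p) := by
  classical
  have hn0 : 0 < n := by omega
  have hp2 : 2 ≤ p := hp.two_le
  have hiltn : i < n := by omega
  have hile : i ≤ p * σi := by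
    have h1 : p * σi % n = i % n := hσ3
    have h2 : p * σi % n ≤ p * σi := Nat.mod_le _ _
    rw [Nat.mod_eq_of_lt hiltn] at h1
    omega
  obtain ⟨c, hc⟩ : ∃ c, p * σi = i + n * c := by
    have hd : n ∣ p * σi - i := (Nat.modEq_iff_dvd' hile).1 hσ3.symm
    obtain ⟨c, hc⟩ := hd
    exact ⟨c, by omega⟩
  have hclt : c < p := by
    have h1 : p * σi ≤ p * (n - 1) := Nat.mul_le_mul_left p hσ2
    have h2 : p * (n - 1) + p = p * n := by
      rw [← Nat.mul_succ]; congr 1; omega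
    have hcm : n * p = p * n := Nat.mul_comm _ _
    have h3 : n * c < n * p := by omega
    exact Nat.lt_of_mul_lt_mul_left h3
  have hεc : εi = c := by
    have h1 : n * εi + i ≡ 0 [MOD p] := Nat.modEq_zero_iff_dvd.mpr hε2
    have h2 : n * c + i ≡ 0 [MOD p] := by
      apply Nat.modEq_zero_iff_dvd.mpr
      refine ⟨σi, ?_⟩; omega
    have h3 : n * εi ≡ n * c [MOD p] := (h1.trans h2.symm).add_right_cancel' i
    have h4 : εi ≡ c [MOD p] := h3.cancel_left_of_coprime hnp.symm
    have h5 : εi % p = c % p := h4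
    rw [Nat.mod_eq_of_lt (by omega), Nat.mod_eq_of_lt hclt] at h5
    exact h5
  have key : ∀ α, εi * e α + i * e α / n = p * σi * e α / n := by
    intro α
    have h1 : p * σi * e α = i * e α + c * e α * n := by
      rw [hc]; ring
    rw [h1, Nat.add_mul_div_right _ _ hn0, hεc]
    ring
  have hle : ∀ α, p * (σi * e α / n) ≤ p * σi * e α / n := by
    intro α
    rw [mul_assoc, Nat.le_div_iff_mul_le hn0]
    calc p * (σi * e α / n) * n = p * (σi * e α / n * n) := by ring
    _ ≤ p * (σi * e α) := Nat.mul_le_mul_left p (Nat.div_mul_le_self _ _)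
  have hbound : ∀ α, p * σi * e α / n - p * (σi * e α / n) ≤ p - 1 := by
    intro α
    have h1 : p * σi * e α / n < p * (σi * e α / n) + p := by
      rw [mul_assoc, Nat.div_lt_iff_lt_mul hn0]
      have h2 := Nat.div_add_mod (σi * e α) n
      have h3 := Nat.mod_lt (σi * e α) hn0
      nlinarith [h2, h3]
    omega
  set g := ∏ α ∈ B, (X - C α) ^ (p * σi * e α / n - p * (σi * e α / n)) with hg
  have hmono : (hmin σi ^ p).Monic := by
    apply Monic.pow
    rw [hhmin]
    exact monic_prod_of_monic _ _ fun α _ => (monic_X_sub_C α).pow _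
  have hfact : f ^ εi * hmin i = hmin σi ^ p * g := by
    rw [hf, hhmin, hhmin, hg, ← Finset.prod_pow, ← Finset.prod_pow,
      ← Finset.prod_mul_distrib, ← Finset.prod_mul_distrib]
    refine Finset.prod_congr rfl fun α _ => ?_
    rw [← pow_mul, ← pow_mul, ← pow_add, ← pow_add]
    congr 1
    have h1 := key α
    have h2 := hle α
    have h3 : e α * εi = εi * e α := Nat.mul_comm _ _
    have h4 : σi * e α / n * p = p * (σi * e α / n) := Nat.mul_comm _ _
    omega
  have hquot : (f ^ εi * hmin i) /ₘ hmin σi ^ p = g := by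
    rw [hfact, mul_divByMonic_cancel_left _ hmono]
  have hgne : g ≠ 0 := by
    rw [hg]
    exact Finset.prod_ne_zero_iff.2 fun γ _ => pow_ne_zero _ (X_sub_C_ne_zero γ)
  have hmult : ∀ β : k, rootMultiplicity β ((f ^ εi * hmin i) /ₘ hmin σi ^ p)
      = if β ∈ B then p * σi * e β / n - p * (σi * e β / n) else 0 := by
    intro β
    rw [hquot, hg, rootMult_prod]
  refine ⟨⟨g, hfact⟩, fun α hα => ⟨by rw [hmult, if_pos hα], hbound α⟩, ?_, ?_⟩
  · intro β hβ hroot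
    have h1 := (rootMultiplicity_pos (by rw [hquot]; exact hgne)).2 hroot
    rw [hmult, if_neg hβ] at h1
    exact Nat.lt_irrefl 0 h1
  · intro β
    rw [hmult]
    split_ifs with h
    · exact lt_of_le_of_lt (hbound β) (by omega)
    · omega
end

section
/- With the setup below, for every integer 1 ≤ i ≤ n − 1 one has d_i ≤ p·d_{σ(i)} + p − 1; consequently ⌊d_i / p⌋ ≤ d_{σ(i)}. -/
/-!
Since `i ≡ p σ(i) (mod n)`, the residue of `i n_α` is the residue of `p · (σ(i) n_α mod n)`, hence
at most `p` times the residue of `σ(i) n_α`. Summing over `α` gives `n (d_i + 1) ≤ p n (d_{σ(i)} + 1)`,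
because both sums of residues are multiples of `n`; this is the first claim, and the second is its
reformulation for floor division.
-/

namespace Int

lemma emod_le_self_of_nonneg {a : ℤ} (n : ℤ) (ha : 0 ≤ a) : a % n ≤ a := by
  rw [← Int.emod_abs, Int.emod_def]
  have : 0 ≤ |n| * (a / |n|) := mul_nonneg (abs_nonneg n) (Int.ediv_nonneg ha (abs_nonneg n))
  linarith

lemma emod_le_mul_emod_of_modEq {n a b c : ℤ} (hn : n ≠ 0) (hc : 0 ≤ c)
    (h : a ≡ c * b [ZMOD n]) : a % n ≤ c * (b % n) := by
  have h' : a % n = c * (b % n) % n := h.trans ((Int.mod_modEq b n).symm.mul_left c)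
  rw [h']
  exact emod_le_self_of_nonneg n (mul_nonneg hc (Int.emod_nonneg b hn))

lemma fdiv_le_of_le_mul_add_sub_one {x y p : ℤ} (hp : 0 < p) (h : x ≤ p * y + p - 1) :
    x.fdiv p ≤ y := by
  rw [Int.fdiv_eq_ediv_of_nonneg _ hp.le, Int.ediv_le_iff_le_mul hp]
  linarith

end Int

section SumEmod

variable {ι : Type*} (s : Finset ι) (f : ι → ℤ) {n : ℤ}

lemma dvd_sum_mul_emod (h : n ∣ ∑ x ∈ s, f x) (a : ℤ) : n ∣ ∑ x ∈ s, a * f x % n := by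
  rw [Int.dvd_iff_emod_eq_zero, ← Finset.sum_int_mod, ← Finset.mul_sum]
  exact Int.emod_eq_zero_of_dvd (h.mul_left a)

lemma sum_mul_emod_le_mul_sum_mul_emod {a b c : ℤ} (hn : n ≠ 0) (hc : 0 ≤ c)
    (h : a ≡ c * b [ZMOD n]) :
    ∑ x ∈ s, a * f x % n ≤ c * ∑ x ∈ s, b * f x % n := by
  rw [Finset.mul_sum]
  refine Finset.sum_le_sum fun x _ => Int.emod_le_mul_emod_of_modEq hn hc ?_
  simpa only [mul_assoc] using h.mul_right (f x)

end SumEmod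

theorem stmt_7_general {ι : Type*} (p : ℕ) (hp : p.Prime)
    (n : ℕ) (hn : 2 ≤ n)
    (B : Finset ι)
    (e : ι → ℕ)
    (hsum : n ∣ ∑ α ∈ B, e α)
    (d : ℕ → ℤ)
    (hd : ∀ j, d j = (∑ α ∈ B, ((j : ℤ) * (e α : ℤ)) % (n : ℤ)) / (n : ℤ) - 1)
    (i : ℕ)
    (σi : ℕ) (hσ3 : p * σi ≡ i [MOD n]) :
    d i ≤ p * d σi + p - 1 ∧ Int.fdiv (d i) p ≤ d σi := by
  have hn0 : (0 : ℤ) < n := by omega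
  have hp0 : (0 : ℤ) < p := by exact_mod_cast hp.pos
  have hmod : (i : ℤ) ≡ p * σi [ZMOD n] := by exact_mod_cast (Int.natCast_modEq_iff.mpr hσ3).symm
  have hsumZ : (n : ℤ) ∣ ∑ α ∈ B, (e α : ℤ) := by exact_mod_cast hsum
  have hquot : (∑ α ∈ B, (i : ℤ) * e α % n) / n ≤ p * ((∑ α ∈ B, (σi : ℤ) * e α % n) / n) := by
    rw [← Int.mul_ediv_assoc _ (dvd_sum_mul_emod B _ hsumZ σi)]
    exact Int.ediv_le_ediv hn0 (sum_mul_emod_le_mul_sum_mul_emod B _ hn0.ne' hp0.le hmod)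
  have hmain : d i ≤ p * d σi + p - 1 := by
    rw [hd, hd]
    linarith
  exact ⟨hmain, Int.fdiv_le_of_le_mul_add_sub_one hp0 hmain⟩

/-- With `d j = ∑_{α ∈ B} ⟨j n_α / n⟩ - 1`, for every `1 ≤ i ≤ n - 1`
one has `d i ≤ p * d (σ i) + p - 1`; consequently `⌊d i / p⌋ ≤ d (σ i)`. -/
theorem stmt_7 {ι : Type*} (p : ℕ) (hp : p.Prime)
    (n : ℕ) (hn : 2 ≤ n) (hnp : Nat.Coprime n p)
    (B : Finset ι) (hB : B.Nonempty)
    (e : ι → ℕ) (he : ∀ α ∈ B, 0 < e α ∧ e α < n)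
    (hsum : n ∣ ∑ α ∈ B, e α)
    (d : ℕ → ℤ)
    (hd : ∀ j, d j = (∑ α ∈ B, ((j : ℤ) * (e α : ℤ)) % (n : ℤ)) / (n : ℤ) - 1)
    (i : ℕ) (hi1 : 1 ≤ i) (hi2 : i ≤ n - 1)
    (σi : ℕ) (hσ1 : 1 ≤ σi) (hσ2 : σi ≤ n - 1) (hσ3 : p * σi ≡ i [MOD n]) :
    d i ≤ p * d σi + p - 1 ∧ Int.fdiv (d i) p ≤ d σi :=
  stmt_7_general p hp n hn B e hsum d hd i σi hσ3
end

section
/- With the setup below, for every integer 1 ≤ i ≤ n − 1 write the polynomial h_{rnk,i} uniquely as h_{rnk,i}(x) = Σ_{t=0}^{p−1} f_{i,t}(x)^p x^t with f_{i,t} ∈ k[x]. Then deg(f_{i,t}) ≤ d_{σ(i)} − ⌊d_i / p⌋ for all 0 ≤ t ≤ p − 1, and equality holds for t = (−d_i − 1) mod p ∈ {0, ..., p−1}. -/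
open Polynomial

/-!
From `hmin σ ^ p * h_rnk = f ^ ε * hmin i`, the relation
`n · deg hmin j = j · deg f - n (d j + 1)` and the identity `p σ = n ε + i` (both sides
agree mod `n` and mod `p` and lie in `[0, n p)`) we get
`deg h_rnk = p d_σ - d_i + p - 1 = p M + t₀` with `M = d_σ - ⌊d_i / p⌋` and
`t₀ = (-d_i - 1) mod p`. In characteristic `p` the exponents occurring in `F_t ^ p x ^ t` are
all `≡ t` mod `p`, and the coefficient of `x ^ (p q + t)` in `∑ F_t ^ p x ^ t` is the `p`-th
power of the `q`-th coefficient of `F_t`. So the leading coefficient of `h_rnk` is the `p`-th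
power of the coefficient of `x ^ M` in `F_{t₀}`, and no `F_t` can have degree above `M`.
-/

theorem Int.mul_sum_ediv_add_mul_sum_emod_ediv {ι : Type*} (s : Finset ι) (a : ι → ℤ)
    {n : ℤ} (h : n ∣ ∑ j ∈ s, a j) :
    n * ∑ j ∈ s, a j / n + n * ((∑ j ∈ s, a j % n) / n) = ∑ j ∈ s, a j := by
  have hmod : ∑ j ∈ s, a j % n = ∑ j ∈ s, a j - n * ∑ j ∈ s, a j / n := by
    simp only [Int.emod_def, Finset.sum_sub_distrib, Finset.mul_sum]
  rw [Int.mul_ediv_cancel' (hmod ▸ dvd_sub h (dvd_mul_right _ _)), hmod]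
  ring

theorem Int.mul_sub_add_sub_one_eq_fdiv_emod {p : ℤ} (hp : 0 < p) (D a : ℤ) :
    p * D - a + p - 1 = p * (D - a.fdiv p) + (-a - 1) % p := by
  have hrem : (-a - 1) % p = p - 1 - a % p := by
    have := Int.emod_add_mul_ediv a p
    rw [show -a - 1 = (p - 1 - a % p) + p * (-(a / p) - 1) by linarith,
      Int.add_mul_emod_self_left, Int.emod_eq_of_lt (by linarith [Int.emod_lt_of_pos a hp])
      (by linarith [Int.emod_nonneg a hp.ne'])]
  rw [hrem, Int.fdiv_eq_ediv_of_nonneg _ hp.le]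
  linarith [Int.emod_add_mul_ediv a p]

theorem Nat.mul_eq_add_of_modEq_of_dvd {n p σ ε i : ℕ} (hnp : n.Coprime p) (hi : i < n)
    (hσ : σ < n) (hε : ε < p) (hσi : p * σ ≡ i [MOD n]) (hεi : p ∣ n * ε + i) :
    p * σ = n * ε + i := by
  have hmod_n : p * σ ≡ n * ε + i [MOD n] :=
    hσi.trans ((Nat.modEq_iff_dvd' (Nat.le_add_left i _)).mpr (by simp))
  have hmod_p : p * σ ≡ n * ε + i [MOD p] :=
    (Nat.modEq_zero_iff_dvd.mpr (dvd_mul_right p σ)).trans (Nat.modEq_zero_iff_dvd.mpr hεi).symm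
  refine ((Nat.modEq_and_modEq_iff_modEq_mul hnp).mp ⟨hmod_n, hmod_p⟩).eq_of_lt_of_lt ?_ ?_
  · nlinarith
  · nlinarith

namespace Polynomial

section CharP

variable {R : Type*} [CommSemiring R] {p : ℕ} [hp : Fact p.Prime] [CharP R p]

theorem coeff_pow_char (g : R[X]) (m : ℕ) :
    (g ^ p).coeff m = if p ∣ m then g.coeff (m / p) ^ p else 0 := by
  rw [← map_frobenius_expand, coeff_map, coeff_expand hp.out.pos]
  split_ifs <;> simp [frobenius_def, hp.out.ne_zero]

theorem coeff_pow_char_mul_X_pow (g : R[X]) (q : ℕ) {s t : ℕ} (hs : s < p) (ht : t < p) :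
    (g ^ p * X ^ s).coeff (p * q + t) = if s = t then g.coeff q ^ p else 0 := by
  rw [coeff_mul_X_pow', coeff_pow_char]
  by_cases hst : s = t
  · subst hst
    simp [Nat.mul_div_cancel_left q hp.out.pos]
  · rw [if_neg hst, ite_eq_right_iff]
    refine fun hle ↦ if_neg ?_
    rintro ⟨c, hc⟩
    have := congrArg (· % p) (Nat.sub_eq_iff_eq_add hle |>.mp hc)
    simp only [Nat.mul_add_mod_self_left, Nat.mod_eq_of_lt ht, Nat.mod_eq_of_lt hs] at this
    exact hst this.symm

theorem coeff_sum_pow_char_mul_X_pow (F : ℕ → R[X]) (q : ℕ) {t : ℕ} (ht : t < p) :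
    (∑ s ∈ Finset.range p, F s ^ p * X ^ s).coeff (p * q + t) = (F t).coeff q ^ p := by
  rw [finsetSum_coeff, Finset.sum_congr rfl fun s hs ↦
    coeff_pow_char_mul_X_pow (F s) q (Finset.mem_range.mp hs) ht]
  simp [ht]

variable [IsReduced R] (F : ℕ → R[X]) {M t₀ : ℕ}

theorem natDegree_le_of_natDegree_sum_pow_char_mul_X_pow (ht₀ : t₀ < p)
    (hdeg : (∑ s ∈ Finset.range p, F s ^ p * X ^ s).natDegree = p * M + t₀)
    {t : ℕ} (ht : t < p) : (F t).natDegree ≤ M := by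
  rcases eq_or_ne (F t) 0 with hF | hF
  · simp [hF]
  have hcoeff :
      (∑ s ∈ Finset.range p, F s ^ p * X ^ s).coeff (p * (F t).natDegree + t) ≠ 0 := by
    rw [coeff_sum_pow_char_mul_X_pow F _ ht]
    exact pow_ne_zero p (leadingCoeff_ne_zero.mpr hF)
  have := hdeg ▸ le_natDegree_of_ne_zero hcoeff
  have : p * (F t).natDegree < p * (M + 1) := by linarith
  exact Nat.lt_succ_iff.mp (Nat.lt_of_mul_lt_mul_left this)

theorem natDegree_eq_of_natDegree_sum_pow_char_mul_X_pow (ht₀ : t₀ < p)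
    (hdeg : (∑ s ∈ Finset.range p, F s ^ p * X ^ s).natDegree = p * M + t₀)
    (hne : ∑ s ∈ Finset.range p, F s ^ p * X ^ s ≠ 0) :
    F t₀ ≠ 0 ∧ (F t₀).natDegree = M := by
  have hcoeff : (F t₀).coeff M ≠ 0 := by
    intro h
    apply leadingCoeff_ne_zero.mpr hne
    rw [leadingCoeff, hdeg, coeff_sum_pow_char_mul_X_pow F M ht₀, h, zero_pow hp.out.ne_zero]
  exact ⟨fun h ↦ hcoeff (by rw [h, coeff_zero]), natDegree_eq_of_le_of_coeff_ne_zero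
    (natDegree_le_of_natDegree_sum_pow_char_mul_X_pow F ht₀ hdeg ht₀) hcoeff⟩

theorem natDegree_sum_pow_char_mul_X_pow_of_natDegree_eq {D a : ℤ}
    (hne : ∑ s ∈ Finset.range p, F s ^ p * X ^ s ≠ 0)
    (hdeg : ((∑ s ∈ Finset.range p, F s ^ p * X ^ s).natDegree : ℤ) = p * D - a + p - 1) :
    (∀ t < p, ((F t).natDegree : ℤ) ≤ D - a.fdiv p) ∧
      F ((-a - 1) % (p : ℤ)).toNat ≠ 0 ∧
      ((F ((-a - 1) % (p : ℤ)).toNat).natDegree : ℤ) = D - a.fdiv p := by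
  have hp0 : (0 : ℤ) < p := by exact_mod_cast hp.out.pos
  replace hdeg := hdeg.trans (Int.mul_sub_add_sub_one_eq_fdiv_emod hp0 D a)
  obtain ⟨t₀, ht₀⟩ := Int.eq_ofNat_of_zero_le (Int.emod_nonneg (-a - 1) hp0.ne')
  have ht₀p : t₀ < p := by have := Int.emod_lt_of_pos (-a - 1) hp0; omega
  obtain ⟨M, hM⟩ := Int.eq_ofNat_of_zero_le (a := D - a.fdiv p) (by nlinarith)
  rw [ht₀, hM] at hdeg ⊢
  rw [Int.toNat_natCast]
  replace hdeg : (∑ s ∈ Finset.range p, F s ^ p * X ^ s).natDegree = p * M + t₀ := by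
    exact_mod_cast hdeg
  obtain ⟨hF₀, hdeg₀⟩ := natDegree_eq_of_natDegree_sum_pow_char_mul_X_pow F ht₀p hdeg hne
  exact ⟨fun t ht ↦ mod_cast natDegree_le_of_natDegree_sum_pow_char_mul_X_pow F ht₀p hdeg ht,
    hF₀, mod_cast hdeg₀⟩

end CharP

theorem monic_prod_X_sub_C_pow {R : Type*} [CommRing R] (B : Finset R) (a : R → ℕ) :
    (∏ α ∈ B, (X - C α) ^ a α).Monic :=
  monic_prod_of_monic _ _ fun α _ ↦ (monic_X_sub_C α).pow _

theorem natDegree_prod_X_sub_C_pow {R : Type*} [CommRing R] [Nontrivial R] (B : Finset R)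
    (a : R → ℕ) : (∏ α ∈ B, (X - C α) ^ a α).natDegree = ∑ α ∈ B, a α := by
  rw [natDegree_prod_of_monic _ _ fun α _ ↦ (monic_X_sub_C α).pow _]
  simp only [(monic_X_sub_C _).natDegree_pow, natDegree_X_sub_C, mul_one]

theorem mul_natDegree_prod_X_sub_C_pow_div_add {R : Type*} [CommRing R] [Nontrivial R]
    (B : Finset R) (e : R → ℕ) {n : ℕ} (hsum : n ∣ ∑ α ∈ B, e α) (j : ℕ) :
    (n : ℤ) * (∏ α ∈ B, (X - C α) ^ (j * e α / n)).natDegree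
      + n * ((∑ α ∈ B, (j : ℤ) * e α % n) / n) = j * ∑ α ∈ B, (e α : ℤ) := by
  have hdvd : (n : ℤ) ∣ ∑ α ∈ B, (j : ℤ) * e α := by
    rw [← Finset.mul_sum]
    exact_mod_cast hsum.mul_left j
  rw [natDegree_prod_X_sub_C_pow, Finset.mul_sum]
  push_cast
  exact Int.mul_sum_ediv_add_mul_sum_emod_ediv B _ hdvd

end Polynomial

theorem stmt_8_general {k : Type*} [Field k]
    (p : ℕ) (hp : p.Prime) [CharP k p]
    (n : ℕ) (hn : 2 ≤ n) (hnp : Nat.Coprime n p)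
    (B : Finset k)
    (e : k → ℕ)
    (hsum : n ∣ ∑ α ∈ B, e α)
    (f : Polynomial k) (hf : f = ∏ α ∈ B, (X - C α) ^ e α)
    (hmin : ℕ → Polynomial k)
    (hhmin : ∀ j, hmin j = ∏ α ∈ B, (X - C α) ^ (j * e α / n))
    (d : ℕ → ℤ)
    (hd : ∀ j, d j = (∑ α ∈ B, ((j : ℤ) * (e α : ℤ)) % (n : ℤ)) / (n : ℤ) - 1)
    (i : ℕ) (hi2 : i ≤ n - 1)
    (σi : ℕ) (hσ2 : σi ≤ n - 1) (hσ3 : p * σi ≡ i [MOD n])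
    (εi : ℕ) (hε1 : εi ≤ p - 1) (hε2 : p ∣ n * εi + i)
    (hdvd : hmin σi ^ p ∣ f ^ εi * hmin i)
    (F : ℕ → Polynomial k)
    (hF : (f ^ εi * hmin i) /ₘ hmin σi ^ p = ∑ t ∈ Finset.range p, F t ^ p * X ^ t) :
    (∀ t < p, ((F t).natDegree : ℤ) ≤ d σi - Int.fdiv (d i) p) ∧
    F ((-(d i) - 1) % (p : ℤ)).toNat ≠ 0 ∧
    (((F ((-(d i) - 1) % (p : ℤ)).toNat).natDegree : ℤ)
      = d σi - Int.fdiv (d i) p) := by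
  have : Fact p.Prime := ⟨hp⟩
  have hpσ : (p * σi : ℤ) = n * εi + i := by
    exact_mod_cast Nat.mul_eq_add_of_modEq_of_dvd hnp (by omega) (by omega)
      (by have := hp.pos; omega) hσ3 hε2
  have hf_monic : f.Monic := hf ▸ monic_prod_X_sub_C_pow B e
  have hmin_monic (j : ℕ) : (hmin j).Monic := hhmin j ▸ monic_prod_X_sub_C_pow B _
  have hdeg_hmin (j : ℕ) :
      (n : ℤ) * (hmin j).natDegree + n * (d j + 1) = j * ∑ α ∈ B, (e α : ℤ) := by
    rw [hhmin, hd, sub_add_cancel]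
    exact mul_natDegree_prod_X_sub_C_pow_div_add B e hsum j
  obtain ⟨h, hmul⟩ := hdvd
  rw [hmul, mul_divByMonic_cancel_left _ ((hmin_monic σi).pow p)] at hF
  have hh : h ≠ 0 :=
    right_ne_zero_of_mul (hmul ▸ ((hf_monic.pow εi).mul (hmin_monic i)).ne_zero)
  have hdeg_h : (h.natDegree : ℤ) = p * d σi - d i + p - 1 := by
    have hdeg := congrArg natDegree hmul
    rw [(hf_monic.pow εi).natDegree_mul (hmin_monic i),
      ((hmin_monic σi).pow p).natDegree_mul' hh, hf_monic.natDegree_pow,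
      (hmin_monic σi).natDegree_pow, hf, natDegree_prod_X_sub_C_pow] at hdeg
    replace hdeg : (εi : ℤ) * ∑ α ∈ B, (e α : ℤ) + (hmin i).natDegree
        = p * (hmin σi).natDegree + h.natDegree := by exact_mod_cast hdeg
    refine mul_left_cancel₀ (by omega : (n : ℤ) ≠ 0) ?_
    linear_combination -(n : ℤ) * hdeg + hdeg_hmin i - p * hdeg_hmin σi
      - (∑ α ∈ B, (e α : ℤ)) * hpσ
  exact natDegree_sum_pow_char_mul_X_pow_of_natDegree_eq F (hF ▸ hh) (hF ▸ hdeg_h)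

/-- Write `h_rnk = f ^ ε i * hmin i / hmin (σ i) ^ p` uniquely as
`h_rnk = ∑_{t=0}^{p-1} (F t)^p * x^t`.  Then `deg (F t) ≤ d (σ i) - ⌊d i / p⌋` for all
`0 ≤ t ≤ p - 1`, and equality holds (with `F t` nonzero) for `t = (-d i - 1) mod p`. -/
theorem stmt_8 {k : Type*} [Field k] [IsAlgClosed k]
    (p : ℕ) (hp : p.Prime) [CharP k p]
    (n : ℕ) (hn : 2 ≤ n) (hnp : Nat.Coprime n p)
    (B : Finset k) (hB : B.Nonempty)
    (e : k → ℕ) (he : ∀ α ∈ B, 0 < e α ∧ e α < n)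
    (hsum : n ∣ ∑ α ∈ B, e α)
    (f : Polynomial k) (hf : f = ∏ α ∈ B, (X - C α) ^ e α)
    (hmin : ℕ → Polynomial k)
    (hhmin : ∀ j, hmin j = ∏ α ∈ B, (X - C α) ^ (j * e α / n))
    (d : ℕ → ℤ)
    (hd : ∀ j, d j = (∑ α ∈ B, ((j : ℤ) * (e α : ℤ)) % (n : ℤ)) / (n : ℤ) - 1)
    (i : ℕ) (hi1 : 1 ≤ i) (hi2 : i ≤ n - 1)
    (σi : ℕ) (hσ1 : 1 ≤ σi) (hσ2 : σi ≤ n - 1) (hσ3 : p * σi ≡ i [MOD n])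
    (εi : ℕ) (hε1 : εi ≤ p - 1) (hε2 : p ∣ n * εi + i)
    (hdvd : hmin σi ^ p ∣ f ^ εi * hmin i)
    (F : ℕ → Polynomial k)
    (hF : (f ^ εi * hmin i) /ₘ hmin σi ^ p = ∑ t ∈ Finset.range p, F t ^ p * X ^ t) :
    (∀ t < p, ((F t).natDegree : ℤ) ≤ d σi - Int.fdiv (d i) p) ∧
    F ((-(d i) - 1) % (p : ℤ)).toNat ≠ 0 ∧
    (((F ((-(d i) - 1) % (p : ℤ)).toNat).natDegree : ℤ)
      = d σi - Int.fdiv (d i) p) :=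
  stmt_8_general p hp n hn hnp B e hsum f hf hmin hhmin d hd i hi2 σi hσ2 hσ3 εi hε1 hε2 hdvd F hF
end
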